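/- Let 𝒜 be a Boolean σ-algebra and X a finite-dimensional vector space. Then every atomless σ-additive measure μ : 𝒜 → X is dividing: every x ∈ 𝒜 decomposes as x = y ⊔ z with y ∧ z = 0, y ∨ z = x, and μ(y) = μ(z). -/

import Mathlib

open Filter Set

namespace Lyap

variable {A : Type*} [BooleanAlgebra A]

structure IsMeas (ν : A → ℝ) : Prop where
  add : ∀ x y : A, x ⊓ y = ⊥ → ν (x ⊔ y) = ν x + ν y
  cont : ∀ (s : ℕ → A) (x : A), Monotone s → IsLUB (Set.range s) x →
    Filter.Tendsto (fun n => ν (s n)) Filter.atTop (nhds (ν x))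

variable {ν lam : A → ℝ}

lemma IsMeas.bot (h : IsMeas ν) : ν ⊥ = 0 := by
  have := h.add ⊥ ⊥ (by simp)
  simp at this; linarith

lemma sup_diff_of_le {y x : A} (h : y ≤ x) : y ⊔ x ⊓ yᶜ = x := by
  rw [sup_inf_left, sup_compl_eq_top, inf_top_eq, sup_eq_right.mpr h]

lemma inf_diff_bot (y x : A) : y ⊓ (x ⊓ yᶜ) = ⊥ := by
  rw [inf_left_comm, ← inf_assoc, inf_assoc, inf_compl_eq_bot, inf_bot_eq]

lemma IsMeas.diff (h : IsMeas ν) {y x : A} (hyx : y ≤ x) : ν (x ⊓ yᶜ) = ν x - ν y := by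
  have := h.add y (x ⊓ yᶜ) (inf_diff_bot y x)
  rw [sup_diff_of_le hyx] at this
  linarith

lemma IsMeas.inf_sup (h : IsMeas ν) (a b : A) : ν (a ⊔ b) = ν a + ν b - ν (a ⊓ b) := by
  have h1 : ν (a ⊔ b) = ν a + ν (b ⊓ aᶜ) := by
    have := h.add a (b ⊓ aᶜ) (inf_diff_bot a b)
    rw [sup_inf_left, sup_compl_eq_top, inf_top_eq] at this
    exact this
  have h2 : ν (b ⊓ (a ⊓ b)ᶜ) = ν b - ν (a ⊓ b) := h.diff inf_le_right
  have h3 : b ⊓ (a ⊓ b)ᶜ = b ⊓ aᶜ := by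
    rw [compl_inf, inf_sup_left]
    simp [inf_comm]
  rw [h3] at h2
  rw [h1, h2]; ring

section fromPrev
lemma exists_isGLB (hσ : ∀ s : ℕ → A, ∃ x : A, IsLUB (Set.range s) x) (s : ℕ → A) :
    ∃ x : A, IsGLB (Set.range s) x := by
  obtain ⟨b, hb⟩ := hσ (fun n => (s n)ᶜ)
  refine ⟨bᶜ, ?_, ?_⟩
  · rintro y ⟨n, rfl⟩
    have : (s n)ᶜ ≤ b := hb.1 ⟨n, rfl⟩
    simpa using compl_le_compl this
  · intro y hy
    have : b ≤ yᶜ := hb.2 (by rintro c ⟨n, rfl⟩; simpa using compl_le_compl (hy ⟨n, rfl⟩))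
    simpa using compl_le_compl this

lemma IsMeas.contAnti (h : IsMeas ν) (s : ℕ → A) (x : A) (hs : Antitone s)
    (hx : IsGLB (Set.range s) x) :
    Filter.Tendsto (fun n => ν (s n)) Filter.atTop (nhds (ν x)) := by
  have hmono : Monotone (fun n => (s n)ᶜ) := fun a b hab => compl_le_compl (hs hab)
  have hlub : IsLUB (Set.range fun n => (s n)ᶜ) xᶜ := by
    constructor
    · rintro y ⟨n, rfl⟩; exact compl_le_compl (hx.1 ⟨n, rfl⟩)
    · intro y hy
      have : yᶜ ≤ x := hx.2 (by
        rintro c ⟨n, rfl⟩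
        have := hy ⟨n, rfl⟩
        calc yᶜ ≤ (s n)ᶜᶜ := compl_le_compl this
        _ = s n := by simp)
      calc xᶜ ≤ yᶜᶜ := compl_le_compl this
      _ = y := by simp
  have hten := h.cont _ _ hmono hlub
  have hsplit : ∀ z : A, ν z = ν (⊤ : A) - ν zᶜ := by
    intro z
    have := h.add z zᶜ (by simp)
    rw [sup_compl_eq_top] at this
    linarith
  have : (fun n => ν (s n)) = fun n => ν (⊤ : A) - ν ((s n)ᶜ) := by
    funext n; exact hsplit (s n)
  rw [this, hsplit x]
  exact Filter.Tendsto.const_sub _ hten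
end fromPrev

/-- A σ-additive real measure is bounded. -/
lemma IsMeas.bounded (hσ : ∀ s : ℕ → A, ∃ x : A, IsLUB (Set.range s) x) (h : IsMeas ν) :
    ∃ M : ℝ, ∀ w : A, |ν w| ≤ M := by
  by_contra hM
  push_neg at hM
  set U : A → Prop := fun a => ∀ M : ℝ, ∃ w, w ≤ a ∧ M < |ν w| with hU
  have hUtop : U ⊤ := by
    intro M
    obtain ⟨w, hw⟩ := hM M
    exact ⟨w, le_top, hw⟩
  have key : ∀ a : A, U a → ∀ M : ℝ, ∃ b, b ≤ a ∧ M ≤ |ν b| ∧ U b := by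
    intro a ha M
    obtain ⟨c, hca, hc⟩ := ha (M + |ν a|)
    by_cases hUc : U c
    · exact ⟨c, hca, by linarith [abs_nonneg (ν a)], hUc⟩
    · have hsplit : ∀ w : A, ν w = ν (w ⊓ c) + ν (w ⊓ cᶜ) := by
        intro w
        have hadd := h.add (w ⊓ c) (w ⊓ cᶜ) (by
          rw [inf_assoc, inf_left_comm c, inf_compl_eq_bot, inf_bot_eq, inf_bot_eq])
        rw [← inf_sup_left, sup_compl_eq_top, inf_top_eq] at hadd
        exact hadd
      simp only [hU] at hUc
      push_neg at hUc
      obtain ⟨M0, hM0⟩ := hUc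
      refine ⟨a ⊓ cᶜ, inf_le_left, ?_, ?_⟩
      · have hd : ν (a ⊓ cᶜ) = ν a - ν c := h.diff hca
        rw [hd]
        have h1 : |ν c| - |ν a| ≤ |ν a - ν c| := by
          have := abs_sub_abs_le_abs_sub (ν c) (ν a)
          rw [abs_sub_comm (ν c)] at this
          linarith
        linarith
      · intro N
        obtain ⟨w, hwa, hw⟩ := ha (N + M0)
        refine ⟨w ⊓ cᶜ, inf_le_inf_right _ hwa, ?_⟩
        have h2 : |ν (w ⊓ c)| ≤ M0 := hM0 _ inf_le_right
        have h3 : ν (w ⊓ cᶜ) = ν w - ν (w ⊓ c) := by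
          have := hsplit w; linarith
        rw [h3]
        have h4 : |ν w| - |ν (w ⊓ c)| ≤ |ν w - ν (w ⊓ c)| := abs_sub_abs_le_abs_sub _ _
        linarith
  -- build a decreasing sequence with |ν (f n)| ≥ n
  let step : {a : A // U a} → ℕ → {a : A // U a} := fun p n =>
    ⟨Classical.choose (key p.1 p.2 n), (Classical.choose_spec (key p.1 p.2 n)).2.2⟩
  let f : ℕ → {a : A // U a} := fun n => Nat.rec ⟨⊤, hUtop⟩ (fun n p => step p (n+1)) n
  have hstep : ∀ n, (f (n+1)).1 ≤ (f n).1 ∧ (n+1 : ℝ) ≤ |ν (f (n+1)).1| := by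
    intro n
    have hs := Classical.choose_spec (key (f n).1 (f n).2 ((n+1 : ℕ) : ℝ))
    have he : f (n+1) = step (f n) (n+1) := rfl
    rw [he]
    exact ⟨hs.1, by exact_mod_cast hs.2.1⟩
  have hanti : Antitone (fun n => (f n).1) :=
    antitone_nat_of_succ_le (fun n => (hstep n).1)
  obtain ⟨x, hx⟩ := exists_isGLB hσ (fun n => (f n).1)
  have hten := h.contAnti _ x hanti hx
  have hbd : ∀ᶠ n in atTop, |ν ((f n).1)| < |ν x| + 1 := by
    have h5 : ∀ᶠ n in atTop, |ν ((f n).1) - ν x| < 1 := by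
      have := Metric.tendsto_atTop.mp hten 1 one_pos
      obtain ⟨N, hN⟩ := this
      filter_upwards [eventually_ge_atTop N] with n hn
      have := hN n hn
      rwa [Real.dist_eq] at this
    filter_upwards [h5] with n hn
    have : |ν ((f n).1)| - |ν x| ≤ |ν ((f n).1) - ν x| := abs_sub_abs_le_abs_sub _ _
    linarith
  obtain ⟨n, hn1, hn2⟩ := (hbd.and (eventually_ge_atTop (⌈|ν x| + 1⌉₊ + 1))).exists
  have hnge : (n : ℝ) ≥ |ν x| + 1 := by
    calc (n:ℝ) ≥ ((⌈|ν x| + 1⌉₊ + 1 : ℕ) : ℝ) := by exact_mod_cast hn2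
    _ ≥ |ν x| + 1 := by
        push_cast
        linarith [Nat.le_ceil (|ν x| + 1)]
  rcases n with _ | m
  · simp at hn2
  · have := (hstep m).2
    have : (m+1:ℝ) ≤ |ν ((f (m+1)).1)| := this
    push_cast at hnge
    linarith

/-- Hahn decomposition. -/
lemma IsMeas.hahn (hσ : ∀ s : ℕ → A, ∃ x : A, IsLUB (Set.range s) x) (h : IsMeas ν) :
    ∃ p : A, (∀ w, w ≤ p → 0 ≤ ν w) ∧ (∀ w, w ≤ pᶜ → ν w ≤ 0) := by
  obtain ⟨M, hM⟩ := h.bounded hσ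
  have hbdd : BddAbove (Set.range ν) :=
    ⟨M, by rintro r ⟨w, rfl⟩; exact le_trans (le_abs_self _) (hM w)⟩
  have hne : (Set.range ν).Nonempty := ⟨ν ⊥, ⟨⊥, rfl⟩⟩
  set S : ℝ := sSup (Set.range ν) with hS
  have hle : ∀ w : A, ν w ≤ S := fun w => le_csSup hbdd ⟨w, rfl⟩
  have hpick : ∀ n : ℕ, ∃ yy : A, S - (2:ℝ)⁻¹ ^ n < ν yy := by
    intro n
    have hlt : S - (2:ℝ)⁻¹ ^ n < S := by
      have : (0:ℝ) < (2:ℝ)⁻¹ ^ n := by positivity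
      linarith
    obtain ⟨r, ⟨w, rfl⟩, hr⟩ := exists_lt_of_lt_csSup hne hlt
    exact ⟨w, hr⟩
  choose y hy using hpick
  let v : ℕ → ℕ → A := fun n => Nat.rec (y n) (fun m a => a ⊓ y (n+m+1))
  have hv0 : ∀ n, v n 0 = y n := fun n => rfl
  have hvs : ∀ n m, v n (m+1) = v n m ⊓ y (n+m+1) := fun n m => rfl
  have hvb : ∀ n m, S - ((2:ℝ)⁻¹ ^ n * 2 - (2:ℝ)⁻¹ ^ (n+m)) < ν (v n m) := by
    intro n m
    induction m with
    | zero =>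
      have h0 := hy n
      rw [hv0]
      have he : S - ((2:ℝ)⁻¹ ^ n * 2 - (2:ℝ)⁻¹ ^ (n+0)) = S - (2:ℝ)⁻¹ ^ n := by
        rw [Nat.add_zero]; ring
      rw [he]
      exact h0
    | succ m ih =>
      rw [hvs]
      have hsup := h.inf_sup (v n m) (y (n+m+1))
      have h1 : ν (v n m ⊔ y (n+m+1)) ≤ S := hle _
      have h3 : S - (2:ℝ)⁻¹ ^ (n+m+1) < ν (y (n+m+1)) := hy (n+m+1)
      have hpow : (2:ℝ)⁻¹ ^ (n+(m+1)) = (2:ℝ)⁻¹ ^ (n+m) * 2⁻¹ := by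
        rw [← pow_succ, ← Nat.add_assoc]
      have hpow2 : (2:ℝ)⁻¹ ^ (n+m+1) = (2:ℝ)⁻¹ ^ (n+m) * 2⁻¹ := by
        rw [← pow_succ]
      rw [hpow]
      have heq : ν (v n m ⊓ y (n+m+1)) = ν (v n m) + ν (y (n+m+1)) - ν (v n m ⊔ y (n+m+1)) := by
        linarith
      rw [heq]
      rw [hpow2] at h3
      linarith
  have hvanti : ∀ n, Antitone (v n) := by
    intro n
    apply antitone_nat_of_succ_le
    intro m
    rw [hvs]
    exact inf_le_left
  have hglb : ∀ n, ∃ u : A, IsGLB (Set.range (v n)) u := fun n => exists_isGLB hσ (v n)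
  choose u hu using hglb
  have hun : ∀ n, S - (2:ℝ)⁻¹ ^ n * 2 ≤ ν (u n) := by
    intro n
    have hten := h.contAnti (v n) (u n) (hvanti n) (hu n)
    apply ge_of_tendsto hten
    filter_upwards with m
    have := hvb n m
    have hp : (0:ℝ) < (2:ℝ)⁻¹ ^ (n+m) := by positivity
    linarith
  -- u is monotone
  have hvy : ∀ n m, v n (m+1) = y n ⊓ v (n+1) m := by
    intro n m
    induction m with
    | zero =>
      rw [hvs, hv0, hv0]
    | succ m ih =>
      rw [hvs n (m+1), ih, hvs (n+1) m, inf_assoc]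
      have he : n+(m+1)+1 = n+1+m+1 := by omega
      rw [he]
  have humono : Monotone u := by
    apply monotone_nat_of_le_succ
    intro n
    apply (hu (n+1)).2
    rintro w ⟨m, rfl⟩
    calc u n ≤ v n (m+1) := (hu n).1 ⟨m+1, rfl⟩
    _ = y n ⊓ v (n+1) m := hvy n m
    _ ≤ v (n+1) m := inf_le_right
  obtain ⟨p, hp⟩ := hσ u
  have htenp := h.cont u p humono hp
  have hνp : ν p = S := by
    have hub : ν p ≤ S := hle p
    have hlb : S ≤ ν p := by
      have hq : Filter.Tendsto (fun n : ℕ => S - (2:ℝ)⁻¹ ^ n * 2) atTop (nhds (S - 0 * 2)) := by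
        apply Filter.Tendsto.sub tendsto_const_nhds
        apply Filter.Tendsto.mul_const
        exact tendsto_pow_atTop_nhds_zero_of_lt_one (by norm_num) (by norm_num)
      rw [show S - 0 * 2 = S by ring] at hq
      exact le_of_tendsto_of_tendsto' hq htenp hun
    linarith
  refine ⟨p, ?_, ?_⟩
  · intro w hw
    have hd : ν (p ⊓ wᶜ) = ν p - ν w := h.diff hw
    have := hle (p ⊓ wᶜ)
    rw [hd, hνp] at this
    linarith
  · intro w hw
    have hdisj : p ⊓ w = ⊥ :=
      disjoint_iff.mp (disjoint_compl_right.mono_right hw)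
    have := h.add p w hdisj
    have h2 := hle (p ⊔ w)
    rw [this, hνp] at h2
    linarith


/-- Atomless nonnegative measure. -/
def Atomless (lam : A → ℝ) : Prop :=
  ∀ e : A, 0 < lam e → ∃ d, d ≤ e ∧ 0 < lam d ∧ 0 < lam (e ⊓ dᶜ)

lemma IsMeas.mono (h : IsMeas lam) (hpos : ∀ w : A, 0 ≤ lam w) {a b : A} (hab : a ≤ b) :
    lam a ≤ lam b := by
  have := h.diff hab
  have := hpos (b ⊓ aᶜ)
  linarith

/-- small pieces of positive measure exist below any element of positive measure -/
lemma small_pieces (h : IsMeas lam) (hpos : ∀ w : A, 0 ≤ lam w) (hat : Atomless lam) :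
    ∀ e : A, 0 < lam e → ∀ ε : ℝ, 0 < ε → ∃ w, w ≤ e ∧ 0 < lam w ∧ lam w ≤ ε := by
  have key : ∀ (k : ℕ) (e : A), 0 < lam e → ∃ w, w ≤ e ∧ 0 < lam w ∧ lam w ≤ lam e / 2 ^ k := by
    intro k
    induction k with
    | zero => intro e he; exact ⟨e, le_rfl, he, by norm_num⟩
    | succ k ih =>
      intro e he
      obtain ⟨w, hwe, hw, hwk⟩ := ih e he
      obtain ⟨d, hdw, hd, hd2⟩ := hat w hw
      have hsplit : lam d + lam (w ⊓ dᶜ) = lam w := by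
        have := h.diff hdw
        linarith
      have hp : (0:ℝ) < 2 ^ k := by positivity
      rcases le_total (lam d) (lam w / 2) with hc | hc
      · refine ⟨d, le_trans hdw hwe, hd, ?_⟩
        rw [pow_succ]
        calc lam d ≤ lam w / 2 := hc
        _ ≤ (lam e / 2 ^ k) / 2 := by linarith
        _ = lam e / (2 ^ k * 2) := by ring
      · refine ⟨w ⊓ dᶜ, le_trans inf_le_left hwe, hd2, ?_⟩
        rw [pow_succ]
        have : lam (w ⊓ dᶜ) ≤ lam w / 2 := by linarith
        calc lam (w ⊓ dᶜ) ≤ lam w / 2 := this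
        _ ≤ (lam e / 2 ^ k) / 2 := by linarith
        _ = lam e / (2 ^ k * 2) := by ring
  intro e he ε hε
  obtain ⟨k, hk⟩ := pow_unbounded_of_one_lt (lam e / ε) (by norm_num : (1:ℝ) < 2)
  obtain ⟨w, hwe, hw, hwk⟩ := key k e he
  refine ⟨w, hwe, hw, ?_⟩
  have hp : (0:ℝ) < 2 ^ k := by positivity
  calc lam w ≤ lam e / 2 ^ k := hwk
  _ ≤ ε := by
      rw [div_le_iff₀ hp]
      rw [div_lt_iff₀ hε] at hk
      nlinarith


/-- Sierpiński: a nonnegative atomless σ-additive measure attains all intermediate values. -/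
lemma sierpinski (hσ : ∀ s : ℕ → A, ∃ x : A, IsLUB (Set.range s) x)
    (h : IsMeas lam) (hpos : ∀ w : A, 0 ≤ lam w) (hat : Atomless lam)
    (x : A) (c : ℝ) (hc0 : 0 ≤ c) (hcx : c ≤ lam x) :
    ∃ y, y ≤ x ∧ lam y = c := by
  classical
  set SS : A → Set ℝ := fun y => {r : ℝ | ∃ w, w ≤ x ⊓ yᶜ ∧ lam y + lam w ≤ c ∧ r = lam w}
    with hSS
  have hSSbdd : ∀ y, BddAbove (SS y) := by
    intro y
    refine ⟨c, ?_⟩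
    rintro r ⟨w, hw1, hw2, rfl⟩
    have := hpos y
    linarith
  have hSSne : ∀ y, lam y ≤ c → (0:ℝ) ∈ SS y := by
    intro y hy
    exact ⟨⊥, bot_le, by rw [h.bot]; linarith, (h.bot).symm⟩
  have pick : ∀ y : A, lam y ≤ c →
      ∃ w, w ≤ x ⊓ yᶜ ∧ lam y + lam w ≤ c ∧ sSup (SS y) ≤ 2 * lam w := by
    intro y hy
    have hne : (SS y).Nonempty := ⟨0, hSSne y hy⟩
    have hs0 : 0 ≤ sSup (SS y) := le_csSup (hSSbdd y) (hSSne y hy)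
    rcases eq_or_lt_of_le hs0 with heq | hlt
    · exact ⟨⊥, bot_le, by rw [h.bot]; linarith, by rw [h.bot, ← heq]; norm_num⟩
    · have hhalf : sSup (SS y) / 2 < sSup (SS y) := by linarith
      obtain ⟨r, ⟨w, hw1, hw2, rfl⟩, hr⟩ := exists_lt_of_lt_csSup hne hhalf
      exact ⟨w, hw1, hw2, by linarith⟩
  set T := {y : A // y ≤ x ∧ lam y ≤ c} with hT
  have step : ∀ t : T, ∃ t' : T, t.1 ≤ t'.1 ∧
      lam t'.1 = lam t.1 + lam (Classical.choose (pick t.1 t.2.2)) ∧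
      sSup (SS t.1) ≤ 2 * lam (Classical.choose (pick t.1 t.2.2)) := by
    intro t
    obtain ⟨hw1, hw2, hw3⟩ := Classical.choose_spec (pick t.1 t.2.2)
    set w := Classical.choose (pick t.1 t.2.2)
    have hdisj : t.1 ⊓ w = ⊥ :=
      disjoint_iff.mp (disjoint_compl_right.mono_right (le_trans hw1 inf_le_right))
    have hadd := h.add t.1 w hdisj
    refine ⟨⟨t.1 ⊔ w, sup_le t.2.1 (le_trans hw1 inf_le_left), by rw [hadd]; linarith⟩,
      le_sup_left, by rw [hadd], hw3⟩
  have hbot : (⊥:A) ≤ x ∧ lam (⊥:A) ≤ c := ⟨bot_le, by rw [h.bot]; linarith⟩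
  let f : ℕ → T := fun n => Nat.rec ⟨⊥, hbot⟩ (fun _ t => Classical.choose (step t)) n
  have hf : ∀ n, (f n).1 ≤ (f (n+1)).1 ∧
      lam (f (n+1)).1 = lam (f n).1 + lam (Classical.choose (pick (f n).1 (f n).2.2)) ∧
      sSup (SS (f n).1) ≤ 2 * lam (Classical.choose (pick (f n).1 (f n).2.2)) := by
    intro n
    exact Classical.choose_spec (step (f n))
  have hmono : Monotone (fun n => (f n).1) := monotone_nat_of_le_succ (fun n => (hf n).1)
  obtain ⟨z, hz⟩ := hσ (fun n => (f n).1)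
  have hzx : z ≤ x := hz.2 (by rintro w ⟨n, rfl⟩; exact (f n).2.1)
  have hten := h.cont _ z hmono hz
  have hzc : lam z ≤ c := le_of_tendsto' hten (fun n => (f n).2.2)
  refine ⟨z, hzx, ?_⟩
  by_contra hne
  have hzlt : lam z < c := lt_of_le_of_ne hzc hne
  have hepos : 0 < lam (x ⊓ zᶜ) := by
    rw [h.diff hzx]; linarith
  obtain ⟨w₀, hw₀e, hw₀pos, hw₀le⟩ := small_pieces h hpos hat _ hepos (c - lam z) (by linarith)
  -- w₀ is admissible at every stage
  have hadm : ∀ n, lam w₀ ∈ SS (f n).1 := by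
    intro n
    have hfz : (f n).1 ≤ z := hz.1 ⟨n, rfl⟩
    refine ⟨w₀, ?_, ?_, rfl⟩
    · refine le_trans hw₀e (inf_le_inf_left _ ?_)
      exact compl_le_compl hfz
    · have : lam (f n).1 ≤ lam z := h.mono hpos hfz
      linarith
  have hgrow : ∀ n : ℕ, (n : ℝ) * (lam w₀ / 2) ≤ lam (f n).1 := by
    intro n
    induction n with
    | zero =>
      have : (f 0).1 = (⊥:A) := rfl
      rw [this, h.bot]
      norm_num
    | succ n ih =>
      have h1 := (hf n).2.1
      have h2 := (hf n).2.2
      have h3 : lam w₀ ≤ sSup (SS (f n).1) := le_csSup (hSSbdd _) (hadm n)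
      push_cast
      nlinarith
  obtain ⟨n, hn⟩ := exists_nat_gt (c / (lam w₀ / 2))
  have := hgrow n
  have hfc := (f n).2.2
  have hp : 0 < lam w₀ / 2 := by linarith
  rw [div_lt_iff₀ hp] at hn
  nlinarith


/-- The dyadic scaling family: given a halving oracle for finitely many measures,
produce for each `s ∈ [0,1]` an element scaling all the measures by `s`, monotonically. -/
lemma scale (hσ : ∀ s : ℕ → A, ∃ x : A, IsLUB (Set.range s) x)
    {m : ℕ} (κ : Fin m → A → ℝ) (hκ : ∀ i, IsMeas (κ i))
    (Hhalf : ∀ a : A, ∃ y, y ≤ a ∧ ∀ i, κ i y = κ i a / 2) (x : A) :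
    ∃ Bf : ℝ → A, (∀ s, Bf s ≤ x) ∧ (∀ s s', s ≤ s' → Bf s ≤ Bf s') ∧
      (∀ s, 0 ≤ s → s ≤ 1 → ∀ i, κ i (Bf s) = s * κ i x) := by
  classical
  set Hp : A → A := fun a => Classical.choose (Hhalf a) with hHp
  have hHp1 : ∀ a, Hp a ≤ a := fun a => (Classical.choose_spec (Hhalf a)).1
  have hHp2 : ∀ a i, κ i (Hp a) = κ i a / 2 := fun a => (Classical.choose_spec (Hhalf a)).2
  set L : ℕ → ℕ → A := fun n => Nat.rec (fun j => if j = 0 then ⊥ else x)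
    (fun _ Ln j => if j % 2 = 0 then Ln (j / 2)
      else Ln (j / 2) ⊔ Hp (Ln (j / 2 + 1) ⊓ (Ln (j / 2))ᶜ)) n with hLdef
  have hL0 : ∀ j, L 0 j = if j = 0 then ⊥ else x := fun _ => rfl
  have hLs : ∀ n j, L (n+1) j = if j % 2 = 0 then L n (j/2)
      else L n (j/2) ⊔ Hp (L n (j/2+1) ⊓ (L n (j/2))ᶜ) := fun _ _ => rfl
  have hLe : ∀ n j, L (n+1) (2*j) = L n j := by
    intro n j
    rw [hLs]
    simp [Nat.mul_mod_right, Nat.mul_div_cancel_left j (by norm_num : 0 < 2)]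
  have hLo : ∀ n j, L (n+1) (2*j+1) = L n j ⊔ Hp (L n (j+1) ⊓ (L n j)ᶜ) := by
    intro n j
    rw [hLs]
    have h1 : (2*j+1) % 2 = 1 := by omega
    have h2 : (2*j+1) / 2 = j := by omega
    rw [h1, h2]
    norm_num
  -- step monotonicity in j
  have hstepj : ∀ n j, L n j ≤ L n (j+1) := by
    intro n
    induction n with
    | zero =>
      intro j
      rw [hL0, hL0]
      rcases Nat.eq_zero_or_pos j with rfl | hj
      · simp
      · rw [if_neg (by omega), if_neg (by omega)]
    | succ n ih =>
      intro j
      obtain ⟨k, rfl | rfl⟩ := Nat.even_or_odd' j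
      · rw [hLe, show 2*k+1 = 2*k+1 from rfl, hLo]
        exact le_sup_left
      · rw [hLo, show 2*k+1+1 = 2*(k+1) from by ring, hLe]
        apply sup_le (ih k)
        calc Hp (L n (k+1) ⊓ (L n k)ᶜ) ≤ L n (k+1) ⊓ (L n k)ᶜ := hHp1 _
        _ ≤ L n (k+1) := inf_le_left
  have hmonoj : ∀ n, Monotone (L n) := fun n => monotone_nat_of_le_succ (hstepj n)
  have hbotL : ∀ n, L n 0 = ⊥ := by
    intro n
    induction n with
    | zero => rw [hL0]; simp
    | succ n ih =>
      have : (0:ℕ) = 2*0 := rfl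
      rw [this, hLe, ih]
  have htop : ∀ n j, 2^n ≤ j → L n j = x := by
    intro n
    induction n with
    | zero => intro j hj; rw [hL0, if_neg (by omega)]
    | succ n ih =>
      intro j hj
      have h2 : 2^(n+1) = 2*2^n := by ring
      obtain ⟨k, rfl | rfl⟩ := Nat.even_or_odd' j
      · rw [hLe]; exact ih k (by omega)
      · rw [hLo, ih k (by omega), ih (k+1) (by omega)]
        have : x ⊓ xᶜ = (⊥:A) := inf_compl_eq_bot
        rw [this]
        have hb : Hp (⊥:A) = ⊥ := le_bot_iff.mp (hHp1 ⊥)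
        rw [hb, sup_bot_eq]
  have hleX : ∀ n j, L n j ≤ x := by
    intro n j
    calc L n j ≤ L n (j + 2^n) := hmonoj n (Nat.le_add_right _ _)
    _ = x := htop n _ (Nat.le_add_left _ _)
  -- measure values
  have hmeas : ∀ n j, j ≤ 2^n → ∀ i, κ i (L n j) = (j : ℝ) / 2^n * κ i x := by
    intro n
    induction n with
    | zero =>
      intro j hj i
      interval_cases j
      · rw [hL0]; simp [(hκ i).bot]
      · rw [hL0]; norm_num
    | succ n ih =>
      intro j hj i
      have h2 : (2:ℕ)^(n+1) = 2*2^n := by ring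
      obtain ⟨k, rfl | rfl⟩ := Nat.even_or_odd' j
      · rw [hLe]
        rw [ih k (by omega) i]
        have : ((2*k : ℕ) : ℝ) = 2*(k:ℝ) := by push_cast; ring
        rw [this, pow_succ]
        ring
      · have hk1 : k + 1 ≤ 2^n := by omega
        rw [hLo]
        have hdisj : L n k ⊓ Hp (L n (k+1) ⊓ (L n k)ᶜ) = ⊥ := by
          apply disjoint_iff.mp
          apply disjoint_compl_right.mono_right
          calc Hp (L n (k+1) ⊓ (L n k)ᶜ) ≤ L n (k+1) ⊓ (L n k)ᶜ := hHp1 _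
          _ ≤ (L n k)ᶜ := inf_le_right
        rw [(hκ i).add _ _ hdisj, hHp2, (hκ i).diff (hstepj n k), ih k (by omega) i,
          ih (k+1) hk1 i]
        have : ((2*k+1 : ℕ) : ℝ) = 2*(k:ℝ)+1 := by push_cast; ring
        rw [this, pow_succ]
        have hp : ((2:ℝ)^n) ≠ 0 := by positivity
        field_simp
        push_cast
        ring
  -- the family
  have hgmono : ∀ s : ℝ, Monotone (fun n => L n ⌊s * 2^n⌋₊) := by
    intro s
    apply monotone_nat_of_le_succ
    intro n
    rcases le_or_gt 0 s with hs | hs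
    · have h1 : 2 * ⌊s * 2^n⌋₊ ≤ ⌊s * 2^(n+1)⌋₊ := by
        apply Nat.le_floor
        push_cast
        have := Nat.floor_le (by positivity : 0 ≤ s * 2^n)
        rw [pow_succ]
        nlinarith
      calc L n ⌊s * 2^n⌋₊ = L (n+1) (2 * ⌊s * 2^n⌋₊) := (hLe n _).symm
      _ ≤ L (n+1) ⌊s * 2^(n+1)⌋₊ := hmonoj (n+1) h1
    · have h0 : ∀ k : ℕ, ⌊s * 2^k⌋₊ = 0 := by
        intro k
        apply Nat.floor_eq_zero.mpr
        have : s * 2^k < 0 := by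
          apply mul_neg_of_neg_of_pos hs
          positivity
        linarith
      rw [h0 n, h0 (n+1), hbotL]
      exact bot_le
  have hBf : ∀ s : ℝ, ∃ b : A, IsLUB (Set.range (fun n => L n ⌊s * 2^n⌋₊)) b :=
    fun s => hσ _
  choose Bf hBfs using hBf
  refine ⟨Bf, ?_, ?_, ?_⟩
  · intro s
    exact (hBfs s).2 (by rintro w ⟨n, rfl⟩; exact hleX n _)
  · intro s s' hss'
    apply (hBfs s).2
    rintro w ⟨n, rfl⟩
    calc L n ⌊s * 2^n⌋₊ ≤ L n ⌊s' * 2^n⌋₊ := by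
          apply hmonoj
          apply Nat.floor_mono
          apply mul_le_mul_of_nonneg_right hss' (by positivity)
    _ ≤ Bf s' := (hBfs s').1 ⟨n, rfl⟩
  · intro s hs0 hs1 i
    have hten := (hκ i).cont _ (Bf s) (hgmono s) (hBfs s)
    have hval : ∀ n, κ i (L n ⌊s * 2^n⌋₊) = (⌊s * 2^n⌋₊ : ℝ) / 2^n * κ i x := by
      intro n
      apply hmeas
      calc ⌊s * 2^n⌋₊ ≤ ⌊(2:ℝ)^n⌋₊ := by
            apply Nat.floor_mono
            nlinarith [pow_pos (by norm_num : (0:ℝ) < 2) n]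
      _ = 2^n := by
          rw [show ((2:ℝ)^n) = ((2^n : ℕ) : ℝ) by push_cast; ring]
          exact Nat.floor_natCast _
    have hten2 : Filter.Tendsto (fun n : ℕ => (⌊s * 2^n⌋₊ : ℝ) / 2^n * κ i x)
        atTop (nhds (s * κ i x)) := by
      apply Filter.Tendsto.mul_const
      have hcomp := (tendsto_nat_floor_mul_div_atTop (R := ℝ) hs0).comp
        (tendsto_pow_atTop_atTop_of_one_lt (by norm_num : (1:ℝ) < 2))
      exact hcomp
    have : Filter.Tendsto (fun n => κ i (L n ⌊s * 2^n⌋₊)) atTop (nhds (s * κ i x)) := by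
      simp only [hval]
      exact hten2
    exact tendsto_nhds_unique hten this


/-- Main induction: simultaneous scaling of finitely many nonnegative measures
dominated by an atomless measure. -/
lemma main_induction (hσ : ∀ s : ℕ → A, ∃ x : A, IsLUB (Set.range s) x) :
    ∀ (n : ℕ) (κ : Fin n → A → ℝ) (lam : A → ℝ),
    (∀ i, IsMeas (κ i)) → (∀ i w, 0 ≤ κ i w) → (∀ i w, κ i w ≤ lam w) →
    IsMeas lam → (∀ w, 0 ≤ lam w) → Atomless lam →
    ∀ (x : A) (t : ℝ), 0 ≤ t → t ≤ 1 →
      ∃ y, y ≤ x ∧ (∀ i, κ i y = t * κ i x) ∧ lam y = t * lam x := by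
  intro n
  induction n with
  | zero =>
    intro κ lam _ _ _ hlam hlpos hlat x t ht0 ht1
    have h1 : 0 ≤ t * lam x := mul_nonneg ht0 (hlpos x)
    have h2 : t * lam x ≤ lam x := by nlinarith [hlpos x]
    obtain ⟨y, hyx, hy⟩ := sierpinski hσ hlam hlpos hlat x (t * lam x) h1 h2
    exact ⟨y, hyx, fun i => i.elim0, hy⟩
  | succ n IH =>
    intro κ lam hκ hκpos hκdom hlam hlpos hlat
    set τ : A → ℝ := κ (Fin.last n) with hτdef
    have Tprev := IH (fun i : Fin n => κ i.castSucc) lam (fun i => hκ _) (fun i => hκpos _)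
      (fun i => hκdom _) hlam hlpos hlat
    -- augmented system for the scaling family: the first n measures plus lam
    set κaug : Fin (n+1) → A → ℝ := Fin.snoc (fun i : Fin n => κ i.castSucc) lam with hκaug
    have hκaugM : ∀ i, IsMeas (κaug i) := by
      intro i
      refine Fin.lastCases ?_ ?_ i
      · rw [hκaug]; simpa using hlam
      · intro j; rw [hκaug]; simpa using hκ j.castSucc
    have Haughalf : ∀ a : A, ∃ y, y ≤ a ∧ ∀ i, κaug i y = κaug i a / 2 := by
      intro a
      obtain ⟨y, hya, hyκ, hylam⟩ := Tprev a (1/2) (by norm_num) (by norm_num)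
      refine ⟨y, hya, ?_⟩
      intro i
      refine Fin.lastCases ?_ ?_ i
      · rw [hκaug]; simpa using by rw [hylam]; ring
      · intro j
        rw [hκaug]
        simpa using by rw [hyκ j]; ring
    -- full halving
    have Hfull : ∀ a : A, ∃ y, y ≤ a ∧ (∀ i, κ i y = κ i a / 2) ∧ lam y = lam a / 2 := by
      intro a
      obtain ⟨B, hBa, hBκ, hBlam⟩ := Tprev a (1/2) (by norm_num) (by norm_num)
      set C : A := a ⊓ Bᶜ with hCdef
      have hCa : C ≤ a := inf_le_left
      have hClam : lam C = lam a / 2 := by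
        rw [hCdef, hlam.diff hBa, hBlam]; ring
      have hCκ : ∀ i : Fin n, κ i.castSucc C = κ i.castSucc a / 2 := by
        intro i
        rw [hCdef, (hκ i.castSucc).diff hBa, hBκ i]; ring
      obtain ⟨Bf, hBf1, hBf2, hBf3⟩ := scale hσ κaug hκaugM Haughalf B
      obtain ⟨Cf, hCf1, hCf2, hCf3⟩ := scale hσ κaug hκaugM Haughalf C
      -- values of lam and the κ's on the families
      have hBflam : ∀ s, 0 ≤ s → s ≤ 1 → lam (Bf s) = s * lam B := by
        intro s h0 h1
        have := hBf3 s h0 h1 (Fin.last n)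
        rw [hκaug] at this; simpa using this
      have hCflam : ∀ s, 0 ≤ s → s ≤ 1 → lam (Cf s) = s * lam C := by
        intro s h0 h1
        have := hCf3 s h0 h1 (Fin.last n)
        rw [hκaug] at this; simpa using this
      have hBfκ : ∀ s, 0 ≤ s → s ≤ 1 → ∀ j : Fin n,
          κ j.castSucc (Bf s) = s * κ j.castSucc B := by
        intro s h0 h1 j
        have := hBf3 s h0 h1 j.castSucc
        rw [hκaug] at this; simpa using this
      have hCfκ : ∀ s, 0 ≤ s → s ≤ 1 → ∀ j : Fin n,
          κ j.castSucc (Cf s) = s * κ j.castSucc C := by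
        intro s h0 h1 j
        have := hCf3 s h0 h1 j.castSucc
        rw [hκaug] at this; simpa using this
      -- τ along the families: increments controlled by lam
      have keyB : ∀ s s' : ℝ, 0 ≤ s → s ≤ s' → s' ≤ 1 →
          0 ≤ τ (Bf s') - τ (Bf s) ∧ τ (Bf s') - τ (Bf s) ≤ (s' - s) * lam B := by
        intro s s' h0 hss h1
        have hle : Bf s ≤ Bf s' := hBf2 _ _ hss
        have hdiff := (hκ (Fin.last n)).diff hle
        have hdlam := hlam.diff hle
        have h2 := hκpos (Fin.last n) (Bf s' ⊓ (Bf s)ᶜ)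
        have h3 := hκdom (Fin.last n) (Bf s' ⊓ (Bf s)ᶜ)
        have h4 : lam (Bf s' ⊓ (Bf s)ᶜ) = (s' - s) * lam B := by
          rw [hdlam, hBflam s' (by linarith) h1, hBflam s h0 (by linarith)]; ring
        constructor
        · rw [← hτdef] at hdiff; linarith
        · rw [← hτdef] at hdiff; linarith
      have keyC : ∀ s s' : ℝ, 0 ≤ s → s ≤ s' → s' ≤ 1 →
          0 ≤ τ (Cf s') - τ (Cf s) ∧ τ (Cf s') - τ (Cf s) ≤ (s' - s) * lam C := by
        intro s s' h0 hss h1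
        have hle : Cf s ≤ Cf s' := hCf2 _ _ hss
        have hdiff := (hκ (Fin.last n)).diff hle
        have hdlam := hlam.diff hle
        have h2 := hκpos (Fin.last n) (Cf s' ⊓ (Cf s)ᶜ)
        have h3 := hκdom (Fin.last n) (Cf s' ⊓ (Cf s)ᶜ)
        have h4 : lam (Cf s' ⊓ (Cf s)ᶜ) = (s' - s) * lam C := by
          rw [hdlam, hCflam s' (by linarith) h1, hCflam s h0 (by linarith)]; ring
        constructor
        · rw [← hτdef] at hdiff; linarith
        · rw [← hτdef] at hdiff; linarith
      set g : ℝ → ℝ := fun s => τ (Bf (1-s)) + τ (Cf s) with hg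
      have hlamB0 : 0 ≤ lam B := hlpos B
      have hlamC0 : 0 ≤ lam C := hlpos C
      have hgcont : ContinuousOn g (Set.Icc (0:ℝ) 1) := by
        have hK : ∀ u v : ℝ, u ∈ Set.Icc (0:ℝ) 1 → v ∈ Set.Icc (0:ℝ) 1 → u ≤ v →
            |g v - g u| ≤ (lam B + lam C) * (v - u) := by
          intro u v hu hv huv
          obtain ⟨hu0, hu1⟩ := hu
          obtain ⟨hv0, hv1⟩ := hv
          have hB' := keyB (1-v) (1-u) (by linarith) (by linarith) (by linarith)
          have hC' := keyC u v hu0 huv hv1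
          rw [hg]
          rw [abs_le]
          constructor <;> simp only
          · nlinarith [hB'.1, hB'.2, hC'.1, hC'.2]
          · nlinarith [hB'.1, hB'.2, hC'.1, hC'.2]
        apply LipschitzOnWith.continuousOn (K := Real.toNNReal (lam B + lam C))
        apply LipschitzOnWith.of_dist_le_mul
        intro u hu v hv
        rcases le_total u v with huv | hvu
        · rw [Real.dist_eq, Real.dist_eq, abs_sub_comm]
          rw [abs_of_nonpos (by linarith : u - v ≤ 0)]
          calc |g v - g u| ≤ (lam B + lam C) * (v - u) := hK u v hu hv huv
          _ ≤ (Real.toNNReal (lam B + lam C) : ℝ) * (v - u) := by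
              apply mul_le_mul_of_nonneg_right _ (by linarith)
              exact Real.le_coe_toNNReal _
          _ = (Real.toNNReal (lam B + lam C) : ℝ) * -(u - v) := by ring
        · rw [Real.dist_eq, Real.dist_eq]
          rw [abs_of_nonneg (by linarith : 0 ≤ u - v)]
          calc |g u - g v| ≤ (lam B + lam C) * (u - v) := hK v u hv hu hvu
          _ ≤ (Real.toNNReal (lam B + lam C) : ℝ) * (u - v) := by
              apply mul_le_mul_of_nonneg_right _ (by linarith)
              exact Real.le_coe_toNNReal _
      -- endpoint values
      have hCf0 : τ (Cf 0) = 0 := by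
        have h1 : τ (Cf 0) ≤ lam (Cf 0) := hκdom (Fin.last n) _
        have h2 : 0 ≤ τ (Cf 0) := hκpos (Fin.last n) _
        have h3 : lam (Cf 0) = 0 := by rw [hCflam 0 le_rfl zero_le_one]; ring
        linarith
      have hBf1' : τ (Bf 1) = τ B := by
        have hle : Bf 1 ≤ B := hBf1 1
        have hdiff := (hκ (Fin.last n)).diff hle
        have hdlam := hlam.diff hle
        have h2 := hκpos (Fin.last n) (B ⊓ (Bf 1)ᶜ)
        have h3 := hκdom (Fin.last n) (B ⊓ (Bf 1)ᶜ)
        have h4 : lam (B ⊓ (Bf 1)ᶜ) = 0 := by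
          rw [hdlam, hBflam 1 zero_le_one le_rfl]; ring
        rw [← hτdef] at hdiff
        linarith
      have hg0 : g 0 = τ B := by
        rw [hg]; simp only; rw [sub_zero, hBf1', hCf0, add_zero]
      have hτC : τ C = τ a - τ B := by
        have h := (hκ (Fin.last n)).diff hBa
        rw [← hτdef] at h
        rw [hCdef]
        exact h
      have hg1 : g 1 = τ C := by
        rw [hg]; simp only; rw [sub_self]
        have hCfτ : τ (Cf 1) = τ C := by
          have hle : Cf 1 ≤ C := hCf1 1
          have hdiff := (hκ (Fin.last n)).diff hle
          have hdlam := hlam.diff hle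
          have h2 := hκpos (Fin.last n) (C ⊓ (Cf 1)ᶜ)
          have h3 := hκdom (Fin.last n) (C ⊓ (Cf 1)ᶜ)
          have h4 : lam (C ⊓ (Cf 1)ᶜ) = 0 := by
            rw [hdlam, hCflam 1 zero_le_one le_rfl]; ring
          rw [← hτdef] at hdiff
          linarith
        have hBfτ : τ (Bf 0) = 0 := by
          have h1 : τ (Bf 0) ≤ lam (Bf 0) := hκdom (Fin.last n) _
          have h2 : 0 ≤ τ (Bf 0) := hκpos (Fin.last n) _
          have h3 : lam (Bf 0) = 0 := by rw [hBflam 0 le_rfl zero_le_one]; ring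
          linarith
        rw [hCfτ, hBfτ, zero_add]
      -- IVT
      have hmem : τ a / 2 ∈ Set.uIcc (g 0) (g 1) := by
        rw [hg0, hg1, hτC]
        rcases le_total (τ B) (τ a - τ B) with hc | hc
        · rw [Set.mem_uIcc]; left; constructor <;> linarith
        · rw [Set.mem_uIcc]; right; constructor <;> linarith
      have hicc : Set.uIcc (0:ℝ) 1 = Set.Icc 0 1 := Set.uIcc_of_le zero_le_one
      have := intermediate_value_uIcc (by rw [hicc]; exact hgcont) hmem
      obtain ⟨s₀, hs₀mem, hs₀⟩ := this
      rw [hicc] at hs₀mem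
      obtain ⟨hs₀0, hs₀1⟩ := hs₀mem
      -- assemble
      set y : A := Bf (1-s₀) ⊔ Cf s₀ with hydef
      have hBfB : Bf (1-s₀) ≤ B := hBf1 _
      have hCfC : Cf s₀ ≤ C := hCf1 _
      have hya : y ≤ a := by
        rw [hydef]
        exact sup_le (le_trans hBfB hBa) (le_trans hCfC hCa)
      have hdisj : Bf (1-s₀) ⊓ Cf s₀ = ⊥ := by
        apply disjoint_iff.mp
        apply Disjoint.mono hBfB hCfC
        rw [hCdef]
        exact disjoint_compl_right.mono_right inf_le_right
      have haddy : ∀ i : Fin (n+1), κ i y = κ i (Bf (1-s₀)) + κ i (Cf s₀) :=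
        fun i => (hκ i).add _ _ hdisj
      have hlamy : lam y = lam a / 2 := by
        rw [hydef, hlam.add _ _ hdisj, hBflam (1-s₀) (by linarith) (by linarith),
          hCflam s₀ hs₀0 hs₀1, hBlam, hClam]
        ring
      refine ⟨y, hya, ?_, hlamy⟩
      intro i
      refine Fin.lastCases ?_ ?_ i
      · show τ y = τ a / 2
        have haddyτ : τ y = τ (Bf (1-s₀)) + τ (Cf s₀) := (hκ (Fin.last n)).add _ _ hdisj
        rw [haddyτ]
        exact hs₀
      · intro j
        rw [haddy j.castSucc, hBfκ (1-s₀) (by linarith) (by linarith) j,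
          hCfκ s₀ hs₀0 hs₀1 j, hBκ j, hCκ j]
        ring
    -- now the full scaling family
    intro x t ht0 ht1
    set κfull : Fin (n+2) → A → ℝ := Fin.snoc κ lam with hκfull
    have hκfullM : ∀ i, IsMeas (κfull i) := by
      intro i
      refine Fin.lastCases ?_ ?_ i
      · rw [hκfull]; simpa using hlam
      · intro j; rw [hκfull]; simpa using hκ j
    have Hfullhalf : ∀ a : A, ∃ y, y ≤ a ∧ ∀ i, κfull i y = κfull i a / 2 := by
      intro a
      obtain ⟨y, hya, hyκ, hylam⟩ := Hfull a
      refine ⟨y, hya, ?_⟩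
      intro i
      refine Fin.lastCases ?_ ?_ i
      · rw [hκfull]; simpa using hylam
      · intro j; rw [hκfull]; simpa using hyκ j
    obtain ⟨Bf, hBf1, hBf2, hBf3⟩ := scale hσ κfull hκfullM Hfullhalf x
    refine ⟨Bf t, hBf1 t, ?_, ?_⟩
    · intro i
      have := hBf3 t ht0 ht1 i.castSucc
      rw [hκfull] at this; simpa using this
    · have := hBf3 t ht0 ht1 (Fin.last (n+1))
      rw [hκfull] at this; simpa using this


/-- LUB commutes with `⊓ p` in a Boolean algebra. -/
lemma isLUB_inf_left {s : ℕ → A} {z : A} (p : A) (hz : IsLUB (Set.range s) z) :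
    IsLUB (Set.range (fun n => s n ⊓ p)) (z ⊓ p) := by
  constructor
  · rintro w ⟨n, rfl⟩
    exact inf_le_inf_right p (hz.1 ⟨n, rfl⟩)
  · intro u hu
    have h1 : ∀ n, s n ≤ u ⊔ pᶜ := by
      intro n
      have h2 : s n ⊓ p ≤ u := hu ⟨n, rfl⟩
      calc s n = (s n ⊓ p) ⊔ (s n ⊓ pᶜ) := by rw [← inf_sup_left, sup_compl_eq_top, inf_top_eq]
      _ ≤ u ⊔ pᶜ := sup_le_sup h2 inf_le_right
    have h3 : z ≤ u ⊔ pᶜ := hz.2 (by rintro w ⟨n, rfl⟩; exact h1 n)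
    calc z ⊓ p ≤ (u ⊔ pᶜ) ⊓ p := inf_le_inf_right p h3
    _ = (u ⊓ p) ⊔ (pᶜ ⊓ p) := by rw [inf_sup_right]
    _ = u ⊓ p := by rw [compl_inf_eq_bot, sup_bot_eq]
    _ ≤ u := inf_le_left

end Lyap

open Lyap Filter

/-- every atomless σ-additive measure on a Boolean σ-algebra with
values in a finite-dimensional (normed) vector space is dividing. -/
theorem atomless_sigma_additive_dividing {A : Type*} [BooleanAlgebra A]
    -- `A` is a Boolean σ-algebra
    (hσ : ∀ s : ℕ → A, ∃ x : A, IsLUB (Set.range s) x)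
    {X : Type*} [NormedAddCommGroup X] [NormedSpace ℝ X] [FiniteDimensional ℝ X]
    (μ : A → X)
    (hadd : ∀ x y : A, x ⊓ y = ⊥ → μ (x ⊔ y) = μ x + μ y)
    -- σ-additivity: `xₙ ↑ x` implies `μ xₙ → μ x`
    (hsigma : ∀ (s : ℕ → A) (x : A), Monotone s → IsLUB (Set.range s) x →
      Filter.Tendsto (fun n => μ (s n)) Filter.atTop (nhds (μ x)))
    (hatomless : ∀ x : A, μ x ≠ 0 → ∃ y : A, y ≤ x ∧ μ y ≠ 0 ∧ μ (x ⊓ yᶜ) ≠ 0) :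
    ∀ x : A, ∃ y z : A, y ⊓ z = ⊥ ∧ y ⊔ z = x ∧ μ y = μ z := by
  classical
  intro x
  -- vector-valued basic lemmas
  have hdiffv : ∀ y x : A, y ≤ x → μ (x ⊓ yᶜ) = μ x - μ y := by
    intro y x h
    have h1 := hadd y (x ⊓ yᶜ) (inf_diff_bot y x)
    rw [sup_diff_of_le h] at h1
    rw [h1]; abel
  set d := Module.finrank ℝ X with hd
  set b : Module.Basis (Fin d) ℝ X := Module.finBasis ℝ X with hb
  set μc : Fin d → A → ℝ := fun i w => b.coord i (μ w) with hμc
  have hμcM : ∀ i, IsMeas (μc i) := by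
    intro i
    constructor
    · intro u v huv
      rw [hμc]
      simp only
      rw [hadd u v huv, map_add]
    · intro s z hs hz
      have hcont : Continuous (b.coord i) := (b.coord i).continuous_of_finiteDimensional
      exact (hcont.tendsto _).comp (hsigma s z hs hz)
  -- Hahn decompositions
  have hhahn : ∀ i, ∃ p : A, (∀ w, w ≤ p → 0 ≤ μc i w) ∧ (∀ w, w ≤ pᶜ → μc i w ≤ 0) :=
    fun i => (hμcM i).hahn hσ
  choose p hp1 hp2 using hhahn
  set pos : Fin d → A → ℝ := fun i w => μc i (w ⊓ p i) with hpos
  set neg : Fin d → A → ℝ := fun i w => -(μc i (w ⊓ (p i)ᶜ)) with hneg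
  have hinfadd : ∀ (q : A) (i : Fin d), IsMeas (fun w => μc i (w ⊓ q)) := by
    intro q i
    constructor
    · intro u v huv
      show μc i ((u ⊔ v) ⊓ q) = μc i (u ⊓ q) + μc i (v ⊓ q)
      rw [inf_sup_right]
      refine (hμcM i).add _ _ (le_bot_iff.mp ?_)
      calc u ⊓ q ⊓ (v ⊓ q) ≤ u ⊓ v := inf_le_inf inf_le_left inf_le_left
      _ ≤ ⊥ := le_of_eq huv
    · intro s z hs hz
      have := (hμcM i).cont (fun n => s n ⊓ q) (z ⊓ q)
        (fun a c hac => inf_le_inf_right q (hs hac)) (isLUB_inf_left q hz)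
      exact this
  have hposM : ∀ i, IsMeas (pos i) := fun i => hinfadd (p i) i
  have hnegM : ∀ i, IsMeas (neg i) := by
    intro i
    have h := hinfadd (p i)ᶜ i
    constructor
    · intro u v huv
      rw [hneg]; simp only
      rw [h.add u v huv]; ring
    · intro s z hs hz
      rw [hneg]
      exact (h.cont s z hs hz).neg
  have hposnn : ∀ i w, 0 ≤ pos i w := fun i w => hp1 i _ inf_le_right
  have hnegnn : ∀ i w, 0 ≤ neg i w := by
    intro i w
    rw [hneg]; simp only
    have := hp2 i _ (inf_le_right : w ⊓ (p i)ᶜ ≤ (p i)ᶜ)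
    linarith
  have hdecomp : ∀ i w, μc i w = pos i w - neg i w := by
    intro i w
    have hsplit : μc i w = μc i (w ⊓ p i) + μc i (w ⊓ (p i)ᶜ) := by
      have h1 := (hμcM i).add (w ⊓ p i) (w ⊓ (p i)ᶜ) (by
        rw [inf_assoc, inf_left_comm (p i), inf_compl_eq_bot, inf_bot_eq, inf_bot_eq])
      rw [← inf_sup_left, sup_compl_eq_top, inf_top_eq] at h1
      exact h1
    rw [hpos, hneg]; simp only
    linarith
  set lam : A → ℝ := fun w => ∑ i, (pos i w + neg i w) with hlam
  have hlamM : IsMeas lam := by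
    constructor
    · intro u v huv
      rw [hlam]
      simp only
      rw [← Finset.sum_add_distrib]
      apply Finset.sum_congr rfl
      intro i _
      rw [(hposM i).add u v huv, (hnegM i).add u v huv]
      ring
    · intro s z hs hz
      rw [hlam]
      simp only
      have : Filter.Tendsto (fun n => ∑ i, (pos i (s n) + neg i (s n))) atTop
          (nhds (∑ i, (pos i z + neg i z))) := by
        apply tendsto_finset_sum
        intro i _
        exact ((hposM i).cont s z hs hz).add ((hnegM i).cont s z hs hz)
      exact this
  have hlampos : ∀ w, 0 ≤ lam w := by
    intro w
    apply Finset.sum_nonneg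
    intro i _
    have := hposnn i w
    have := hnegnn i w
    linarith
  have hdompos : ∀ i w, pos i w ≤ lam w := by
    intro i w
    calc pos i w ≤ pos i w + neg i w := by linarith [hnegnn i w]
    _ ≤ lam w := Finset.single_le_sum (f := fun j => pos j w + neg j w)
        (fun j _ => by show (0:ℝ) ≤ pos j w + neg j w; linarith [hposnn j w, hnegnn j w]) (Finset.mem_univ i)
  have hdomneg : ∀ i w, neg i w ≤ lam w := by
    intro i w
    calc neg i w ≤ pos i w + neg i w := by linarith [hposnn i w]
    _ ≤ lam w := Finset.single_le_sum (f := fun j => pos j w + neg j w)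
        (fun j _ => by show (0:ℝ) ≤ pos j w + neg j w; linarith [hposnn j w, hnegnn j w]) (Finset.mem_univ i)
  -- relation between μ and lam
  have hμzero : ∀ w, μ w ≠ 0 → 0 < lam w := by
    intro w hw
    have : ∃ i, μc i w ≠ 0 := by
      by_contra hcon
      push_neg at hcon
      apply hw
      have : ∀ i, b.repr (μ w) i = b.repr (0 : X) i := by
        intro i
        rw [map_zero]
        have := hcon i
        rw [hμc] at this
        simp only at this
        rwa [b.coord_apply] at this
      exact b.ext_elem this
    obtain ⟨i, hi⟩ := this
    have hps : pos i w + neg i w > 0 := by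
      rcases lt_trichotomy (μc i w) 0 with hlt | heq | hgt
      · have := hdecomp i w
        have := hposnn i w
        have := hnegnn i w
        nlinarith
      · exact absurd heq hi
      · have := hdecomp i w
        have := hposnn i w
        have := hnegnn i w
        nlinarith
    calc (0:ℝ) < pos i w + neg i w := hps
    _ ≤ lam w := Finset.single_le_sum (f := fun j => pos j w + neg j w)
        (fun j _ => by show (0:ℝ) ≤ pos j w + neg j w; linarith [hposnn j w, hnegnn j w]) (Finset.mem_univ i)
  have hlamzero : ∀ e, 0 < lam e → ∃ w, w ≤ e ∧ μ w ≠ 0 := by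
    intro e he
    have : ∃ i, 0 < pos i e + neg i e := by
      by_contra hcon
      push_neg at hcon
      have : lam e = 0 := by
        rw [hlam]
        apply le_antisymm
        · apply Finset.sum_nonpos
          intro i _
          exact hcon i
        · exact hlampos e
      linarith
    obtain ⟨i, hi⟩ := this
    rcases lt_or_ge 0 (pos i e) with hp' | hp'
    · refine ⟨e ⊓ p i, inf_le_left, ?_⟩
      intro hcon
      have : μc i (e ⊓ p i) = 0 := by
        rw [hμc]; simp only
        rw [hcon, map_zero]
      rw [hpos] at hp'
      simp only at hp'
      linarith
    · have hn' : 0 < neg i e := by linarith [hposnn i e]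
      refine ⟨e ⊓ (p i)ᶜ, inf_le_left, ?_⟩
      intro hcon
      have : μc i (e ⊓ (p i)ᶜ) = 0 := by
        rw [hμc]; simp only
        rw [hcon, map_zero]
      rw [hneg] at hn'
      simp only at hn'
      linarith
  have hlamat : Atomless lam := by
    intro e he
    obtain ⟨w, hwe, hw⟩ := hlamzero e he
    obtain ⟨y₀, hy₀w, hy₀, hy₀'⟩ := hatomless w hw
    refine ⟨y₀, le_trans hy₀w hwe, hμzero _ hy₀, ?_⟩
    have h1 : 0 < lam (w ⊓ y₀ᶜ) := hμzero _ hy₀'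
    have h2 : w ⊓ y₀ᶜ ≤ e ⊓ y₀ᶜ := inf_le_inf_right _ hwe
    have := hlamM.mono hlampos h2
    linarith
  -- the 2d nonnegative coordinate measures
  set κl : Fin (2*d) → A → ℝ := fun i =>
    if h : (i : ℕ) < d then pos ⟨i, h⟩ else neg ⟨(i : ℕ) - d, by omega⟩ with hκl
  have hκlM : ∀ i, IsMeas (κl i) := by
    intro i
    simp only [hκl]
    by_cases h : (i : ℕ) < d
    · rw [dif_pos h]; exact hposM _
    · rw [dif_neg h]; exact hnegM _
  have hκlpos : ∀ i w, 0 ≤ κl i w := by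
    intro i w
    simp only [hκl]
    by_cases h : (i : ℕ) < d
    · rw [dif_pos h]; exact hposnn _ w
    · rw [dif_neg h]; exact hnegnn _ w
  have hκldom : ∀ i w, κl i w ≤ lam w := by
    intro i w
    simp only [hκl]
    by_cases h : (i : ℕ) < d
    · rw [dif_pos h]; exact hdompos _ w
    · rw [dif_neg h]; exact hdomneg _ w
  obtain ⟨y, hyx, hyκ, _⟩ := main_induction hσ (2*d) κl lam hκlM hκlpos hκldom
    hlamM hlampos hlamat x (1/2) (by norm_num) (by norm_num)
  -- extract coordinate halving
  have hposhalf : ∀ i : Fin d, pos i y = 1/2 * pos i x := by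
    intro i
    have hlt : (i : ℕ) < 2*d := by omega
    have := hyκ ⟨(i : ℕ), hlt⟩
    simp only [hκl] at this
    rw [dif_pos i.isLt] at this
    simpa using this
  have hneghalf : ∀ i : Fin d, neg i y = 1/2 * neg i x := by
    intro i
    have hlt : d + (i : ℕ) < 2*d := by omega
    have := hyκ ⟨d + (i : ℕ), hlt⟩
    simp only [hκl] at this
    rw [dif_neg (by omega : ¬ (d + (i:ℕ) < d))] at this
    have heq : (⟨d + (i:ℕ) - d, by omega⟩ : Fin d) = i := by
      apply Fin.ext
      simp
    rw [heq] at this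
    exact this
  have hμy : ∀ i : Fin d, μc i y = 1/2 * μc i x := by
    intro i
    rw [hdecomp i y, hdecomp i x, hposhalf i, hneghalf i]
    ring
  have hμhalf : μ y = (2:ℝ)⁻¹ • μ x := by
    apply Module.Basis.ext_elem (b := b)
    intro i
    rw [map_smul]
    have := hμy i
    rw [hμc] at this
    simp only at this
    rw [b.coord_apply, b.coord_apply] at this
    rw [this]
    simp
  refine ⟨y, x ⊓ yᶜ, inf_diff_bot y x, sup_diff_of_le hyx, ?_⟩
  rw [hdiffv y x hyx, hμhalf]
  rw [← one_smul ℝ (μ x)]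
  rw [smul_smul, ← sub_smul]
  norm_num
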